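/- arXiv:2511.05815 — 2 statements merged into one kernel-verified Lean document; each statement's English description precedes it below -/
import Mathlib

section
/- Tchebycheff scalarization (necessity direction): if x* ∈ X is weakly Pareto optimal, then there exists a weight vector λ on the simplex (λ_i ≥ 0, ∑ λ_i = 1) such that x* minimizes l_tch(x | λ) = max_i λ_i (f_i(x) − z_i) over X, where z_i < inf_{x∈X} f_i(x). In particular one may choose λ_i proportional to 1/(f_i(x*) − z_i). -/
/-!
With `c i = f x* i - z i > 0`, the weights `λ i ∝ 1 / c i` equalize the weighted deviations
`λ i * c i`, so the Tchebycheff value of `x*` is their common value. Any `x ∈ X` fails to improve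
`x*` strictly in some coordinate `i`, and that coordinate alone already lifts the Tchebycheff value
of `x` to at least the common value.
-/

open Finset

section InverseWeights

variable {ι : Type*} [Fintype ι]

noncomputable def inverseWeights (c : ι → ℝ) (i : ι) : ℝ := (c i)⁻¹ / ∑ j, (c j)⁻¹

lemma inverseWeights_nonneg {c : ι → ℝ} (hc : ∀ i, 0 ≤ c i) (i : ι) :
    0 ≤ inverseWeights c i :=
  div_nonneg (inv_nonneg.2 (hc i)) (sum_nonneg fun j _ => inv_nonneg.2 (hc j))

lemma sum_inverseWeights [Nonempty ι] {c : ι → ℝ} (hc : ∀ i, 0 < c i) :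
    ∑ i, inverseWeights c i = 1 := by
  simp only [inverseWeights, ← sum_div]
  exact div_self (sum_pos (fun j _ => inv_pos.2 (hc j)) univ_nonempty).ne'

lemma inverseWeights_mul_self {c : ι → ℝ} {i : ι} (hci : c i ≠ 0) :
    inverseWeights c i * c i = (∑ j, (c j)⁻¹)⁻¹ := by
  rw [inverseWeights]
  field_simp

lemma ciSup_inverseWeights_mul_self [Nonempty ι] {c : ι → ℝ} (hc : ∀ i, c i ≠ 0) :
    ⨆ i, inverseWeights c i * c i = (∑ j, (c j)⁻¹)⁻¹ := by
  simp_rw [inverseWeights_mul_self (hc _)]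
  exact ciSup_const

end InverseWeights

theorem weaklyParetoOptimal_tchebycheff_minimizer_general {α : Type*} {m : ℕ} [NeZero m]
    (f : α → Fin m → ℝ) (X : Set α)
    (z : Fin m → ℝ) (hz : ∀ x ∈ X, ∀ i, z i < f x i)
    (xstar : α) (hxstar : xstar ∈ X)
    (hweak : ¬ ∃ x ∈ X, ∀ i, f x i < f xstar i) :
    ∃ lam : Fin m → ℝ, (∀ i, 0 ≤ lam i) ∧ (∑ i, lam i = 1) ∧
      ∀ x ∈ X, (⨆ i, lam i * (f xstar i - z i)) ≤ ⨆ i, lam i * (f x i - z i) := by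
  set c : Fin m → ℝ := fun i => f xstar i - z i
  have hc : ∀ i, 0 < c i := fun i => sub_pos.2 (hz xstar hxstar i)
  have hw := inverseWeights_nonneg fun i => (hc i).le
  refine ⟨inverseWeights c, hw, sum_inverseWeights hc, fun x hx => ?_⟩
  obtain ⟨i, hi⟩ : ∃ i, f xstar i ≤ f x i := by
    push Not at hweak
    exact hweak x hx
  calc ⨆ j, inverseWeights c j * c j
      = inverseWeights c i * c i := by
        rw [ciSup_inverseWeights_mul_self fun j => (hc j).ne', inverseWeights_mul_self (hc i).ne']
    _ ≤ inverseWeights c i * (f x i - z i) := by gcongr; exacts [hw i, sub_le_sub_right hi _]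
    _ ≤ ⨆ j, inverseWeights c j * (f x j - z j) :=
        le_ciSup (f := fun j => inverseWeights c j * (f x j - z j)) (Set.finite_range _).bddAbove i

/-- Necessity direction of the Tchebycheff scalarization theorem: every weakly Pareto optimal
point minimizes the Tchebycheff scalarization for some weight vector on the simplex. -/
theorem weaklyParetoOptimal_tchebycheff_minimizer {α : Type*} {m : ℕ} [NeZero m]
    (f : α → Fin m → ℝ) (X : Set α) (hX : X.Nonempty)
    (z : Fin m → ℝ) (hz : ∀ x ∈ X, ∀ i, z i < f x i)
    (xstar : α) (hxstar : xstar ∈ X)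
    (hweak : ¬ ∃ x ∈ X, ∀ i, f x i < f xstar i) :
    ∃ lam : Fin m → ℝ, (∀ i, 0 ≤ lam i) ∧ (∑ i, lam i = 1) ∧
      ∀ x ∈ X, (⨆ i, lam i * (f xstar i - z i)) ≤ ⨆ i, lam i * (f x i - z i) :=
  weaklyParetoOptimal_tchebycheff_minimizer_general f X z hz xstar hxstar hweak
end

section
/- If x* minimizes the smooth Tchebycheff scalarization l_stch(x) = ν log(∑_i exp(λ_i(f_i(x) − z_i)/ν)) over X for some ν > 0 and strictly positive weights λ_i > 0, then x* is weakly Pareto optimal. -/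
open Real Finset

theorem log_sum_exp_lt_log_sum_exp {ι : Type*} [Fintype ι] [Nonempty ι] {a b : ι → ℝ}
    (h : ∀ i, a i < b i) : log (∑ i, exp (a i)) < log (∑ i, exp (b i)) :=
  log_lt_log (sum_pos (fun i _ => exp_pos (a i)) univ_nonempty)
    (sum_lt_sum_of_nonempty univ_nonempty fun i _ => exp_lt_exp.2 (h i))

noncomputable def smoothTchebycheff {ι : Type*} [Fintype ι] (lam z : ι → ℝ) (ν : ℝ)
    (y : ι → ℝ) : ℝ :=
  ν * log (∑ i, exp (lam i * (y i - z i) / ν))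

theorem smoothTchebycheff_lt_smoothTchebycheff {ι : Type*} [Fintype ι] [Nonempty ι]
    {lam : ι → ℝ} (hlam : ∀ i, 0 < lam i) (z : ι → ℝ) {ν : ℝ} (hν : 0 < ν) {y y' : ι → ℝ}
    (h : ∀ i, y i < y' i) : smoothTchebycheff lam z ν y < smoothTchebycheff lam z ν y' := by
  refine mul_lt_mul_of_pos_left (log_sum_exp_lt_log_sum_exp fun i => ?_) hν
  gcongr
  · exact hlam i
  · exact h i

theorem stch_minimizer_weaklyParetoOptimal_general {α : Type*} {m : ℕ} [NeZero m]
    (f : α → Fin m → ℝ) (X : Set α)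
    (lam : Fin m → ℝ) (hpos : ∀ i, 0 < lam i)
    (z : Fin m → ℝ) (ν : ℝ) (hν : 0 < ν)
    (xstar : α)
    (hmin : ∀ x ∈ X,
      ν * Real.log (∑ i, Real.exp (lam i * (f xstar i - z i) / ν)) ≤
      ν * Real.log (∑ i, Real.exp (lam i * (f x i - z i) / ν))) :
    ¬ ∃ x ∈ X, ∀ i, f x i < f xstar i := by
  rintro ⟨x, hxX, hlt⟩
  exact (hmin x hxX).not_gt (smoothTchebycheff_lt_smoothTchebycheff hpos z hν hlt)

/-- A minimizer of the smooth Tchebycheff scalarization with strictly positive weights is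
weakly Pareto optimal. -/
theorem stch_minimizer_weaklyParetoOptimal {α : Type*} {m : ℕ} [NeZero m]
    (f : α → Fin m → ℝ) (X : Set α)
    (lam : Fin m → ℝ) (hpos : ∀ i, 0 < lam i)
    (z : Fin m → ℝ) (ν : ℝ) (hν : 0 < ν)
    (xstar : α) (hxstar : xstar ∈ X)
    (hmin : ∀ x ∈ X,
      ν * Real.log (∑ i, Real.exp (lam i * (f xstar i - z i) / ν)) ≤
      ν * Real.log (∑ i, Real.exp (lam i * (f x i - z i) / ν))) :
    ¬ ∃ x ∈ X, ∀ i, f x i < f xstar i :=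
  stch_minimizer_weaklyParetoOptimal_general f X lam hpos z ν hν xstar hmin
end
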